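/- Let $\mathcal{A} \subseteq \mathcal{P}[n]$ be any family of subsets of $[n]$, let $i, j \in [n]$ with $i < j$, and let $\mathcal{C} = \mathcal{C}_{ij}\mathcal{A}$. Then for every nonnegative integer $m$, the number of intersecting subfamilies of $\mathcal{C}$ of order $m$ is at least the number of intersecting subfamilies of $\mathcal{A}$ of order $m$. -/

import Mathlib

open Finset

/-- A family of finite sets is intersecting if any two members meet. -/
def IsIntersecting (𝓑 : Finset (Finset ℕ)) : Prop :=
  ∀ A ∈ 𝓑, ∀ B ∈ 𝓑, (A ∩ B).Nonempty

instance : DecidablePred IsIntersecting :=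
  fun 𝓑 => decidable_of_iff (∀ A ∈ 𝓑, ∀ B ∈ 𝓑, (A ∩ B).Nonempty) Iff.rfl

/-- A family is `t`-intersecting if any two members meet in at least `t` elements. -/
def TIntersecting (t : ℕ) (𝓐 : Finset (Finset ℕ)) : Prop :=
  ∀ A ∈ 𝓐, ∀ B ∈ 𝓐, t ≤ (A ∩ B).card

/-- The probability that the p-random subfamily of `𝓐` is intersecting. -/
noncomputable def probInter (p : ℝ) (𝓐 : Finset (Finset ℕ)) : ℝ :=
  ∑ 𝓑 ∈ 𝓐.powerset.filter IsIntersecting,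
    p ^ 𝓑.card * (1 - p) ^ (𝓐.card - 𝓑.card)

/-- The number of intersecting subfamilies of `𝓐` of order `m`. -/
def numInter (𝓐 : Finset (Finset ℕ)) (m : ℕ) : ℕ :=
  ((𝓐.powerset.filter IsIntersecting).filter (fun 𝓑 => 𝓑.card = m)).card

/-- `[n]^{(≥ r)}`: all subsets of `[n] = {1,…,n}` of size at least `r`. -/
def atLeast (n r : ℕ) : Finset (Finset ℕ) :=
  (Finset.Icc 1 n).powerset.filter (fun A => r ≤ A.card)

/-- `[n]^{(r)}`: all subsets of `[n] = {1,…,n}` of size exactly `r`. -/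
def uniformFam (n r : ℕ) : Finset (Finset ℕ) :=
  Finset.powersetCard r (Finset.Icc 1 n)

/-- The `ij`-compression of a set. -/
def setCompress (i j : ℕ) (A : Finset ℕ) : Finset ℕ :=
  if j ∈ A ∧ i ∉ A then insert i (A.erase j) else A

/-- The `ij`-compression of a family. -/
def famCompress (i j : ℕ) (𝓐 : Finset (Finset ℕ)) : Finset (Finset ℕ) :=
  𝓐.image (setCompress i j) ∪ 𝓐.filter (fun A => setCompress i j A ∈ 𝓐)

/-- A family is left-compressed if it is `ij`-compressed for all `i < j` in `[n]`. -/
def LeftCompressed (n : ℕ) (𝓐 : Finset (Finset ℕ)) : Prop :=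
  ∀ i j : ℕ, 1 ≤ i → i < j → j ≤ n → famCompress i j 𝓐 = 𝓐

/-- The `UV`-compression of a set. -/
def setUV (U V A : Finset ℕ) : Finset ℕ :=
  if V ⊆ A ∧ Disjoint U A then (A ∪ U) \ V else A

/-- The `UV`-compression of a family. -/
def famUV (U V : Finset ℕ) (𝓐 : Finset (Finset ℕ)) : Finset (Finset ℕ) :=
  𝓐.image (setUV U V) ∪ 𝓐.filter (fun A => setUV U V A ∈ 𝓐)

/-- `f` is a pairing function on `U`: an involution on `U` with no fixed point. -/
def IsPairing (f : ℕ → ℕ) (U : Finset ℕ) : Prop :=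
  (∀ x ∈ U, f x ∈ U) ∧ (∀ x ∈ U, f (f x) = x) ∧ (∀ x ∈ U, f x ≠ x)

/-- The `(U,v,f)`-compression of a set. -/
def setUvf (U : Finset ℕ) (v : ℕ) (f : ℕ → ℕ) (A : Finset ℕ) : Finset ℕ :=
  if v ∈ A then A else (A ∩ U).image f ∪ {v} ∪ (A \ U)

/-- The `(U,v,f)`-compression of a family. -/
def famUvf (U : Finset ℕ) (v : ℕ) (f : ℕ → ℕ) (𝓐 : Finset (Finset ℕ)) : Finset (Finset ℕ) :=
  𝓐.image (setUvf U v f) ∪ 𝓐.filter (fun A => setUvf U v f A ∈ 𝓐)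

/-!
Send an intersecting `𝓑 ⊆ 𝓐` to the family obtained by compressing exactly those members of `𝓑`
that must be compressed: `B` must be if `C_ij B ∉ 𝓐` (then `B ∉ C_ij 𝓐`), and also if `B` is
disjoint from the compression of a member that must be. This closure keeps the image
intersecting, as all compressed members contain `i`. Only sets with `j ∈ B`, `i ∉ B` and
`C_ij B ∉ 𝓑` get compressed, so the size is kept; and the members that must be compressed can
be recognised from the image alone, so `𝓑` is recovered from it.
-/

section SetCompress

variable {i j : ℕ} {A B : Finset ℕ}

lemma setCompress_of_mem_of_notMem (hA : j ∈ A ∧ i ∉ A) :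
    setCompress i j A = insert i (A.erase j) :=
  if_pos hA

lemma setCompress_of_not (hA : ¬(j ∈ A ∧ i ∉ A)) : setCompress i j A = A :=
  if_neg hA

lemma mem_setCompress_left (hA : j ∈ A ∧ i ∉ A) : i ∈ setCompress i j A := by
  rw [setCompress_of_mem_of_notMem hA]
  exact mem_insert_self _ _

lemma erase_subset_setCompress (i j : ℕ) (A : Finset ℕ) : A.erase j ⊆ setCompress i j A := by
  by_cases hA : j ∈ A ∧ i ∉ A
  · rw [setCompress_of_mem_of_notMem hA]
    exact subset_insert _ _
  · rw [setCompress_of_not hA]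
    exact erase_subset _ _

lemma setCompress_injOn (i j : ℕ) : Set.InjOn (setCompress i j) {A | j ∈ A ∧ i ∉ A} := by
  have hinv : ∀ A : Finset ℕ, j ∈ A ∧ i ∉ A → insert j ((setCompress i j A).erase i) = A := by
    intro A hA
    rw [setCompress_of_mem_of_notMem hA, erase_insert (fun h => hA.2 (mem_of_mem_erase h)),
      insert_erase hA.1]
  intro A hA B hB h
  rw [← hinv A hA, ← hinv B hB, h]

lemma disjoint_setCompress_comm (hA : j ∈ A ∧ i ∉ A) (hB : j ∈ B ∧ i ∉ B)
    (h : Disjoint A (setCompress i j B)) : Disjoint (setCompress i j A) B := by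
  rw [setCompress_of_mem_of_notMem hA, disjoint_insert_left, disjoint_erase_comm]
  exact ⟨hB.2, h.mono_right (erase_subset_setCompress i j B)⟩

end SetCompress

inductive MustCompress (i j : ℕ) (𝓐 𝓑 : Finset (Finset ℕ)) : Finset ℕ → Prop
  | of_compress_notMem {B : Finset ℕ} :
      B ∈ 𝓑 → setCompress i j B ∉ 𝓐 → MustCompress i j 𝓐 𝓑 B
  | of_disjoint {A B : Finset ℕ} : A ∈ 𝓑 → MustCompress i j 𝓐 𝓑 B →
      Disjoint A (setCompress i j B) → MustCompress i j 𝓐 𝓑 A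

open Classical in
noncomputable def partialCompress (i j : ℕ) (𝓐 𝓑 : Finset (Finset ℕ)) (B : Finset ℕ) :
    Finset ℕ :=
  if MustCompress i j 𝓐 𝓑 B then setCompress i j B else B

section PartialCompress

variable {i j : ℕ} {𝓐 𝓑 𝓑' : Finset (Finset ℕ)} {B : Finset ℕ}

lemma MustCompress.mem (hB : MustCompress i j 𝓐 𝓑 B) : B ∈ 𝓑 := by
  cases hB <;> assumption

lemma partialCompress_of_mustCompress (hB : MustCompress i j 𝓐 𝓑 B) :
    partialCompress i j 𝓐 𝓑 B = setCompress i j B :=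
  if_pos hB

lemma partialCompress_of_not_mustCompress (hB : ¬MustCompress i j 𝓐 𝓑 B) :
    partialCompress i j 𝓐 𝓑 B = B :=
  if_neg hB

lemma MustCompress.compressible (h𝓑 : 𝓑 ⊆ 𝓐) (hint : IsIntersecting 𝓑)
    (hB : MustCompress i j 𝓐 𝓑 B) : (j ∈ B ∧ i ∉ B) ∧ setCompress i j B ∉ 𝓑 := by
  induction hB with
  | @of_compress_notMem B hB hC =>
    have hcomp : j ∈ B ∧ i ∉ B := by
      by_contra hB'
      exact hC ((setCompress_of_not hB').symm ▸ h𝓑 hB)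
    exact ⟨hcomp, fun h => hC (h𝓑 h)⟩
  | @of_disjoint A B hA hB hdisj ih =>
    have hiA : i ∉ A := fun hiA => disjoint_left.mp hdisj hiA (mem_setCompress_left ih.1)
    have hjA : j ∈ A := by
      obtain ⟨x, hx⟩ := hint A hA B hB.mem
      obtain ⟨hxA, hxB⟩ := mem_inter.mp hx
      by_contra hjA
      have hxj : x ≠ j := fun h => hjA (h ▸ hxA)
      exact disjoint_left.mp hdisj hxA (erase_subset_setCompress i j B (mem_erase.mpr ⟨hxj, hxB⟩))
    refine ⟨⟨hjA, hiA⟩, fun hCA => ?_⟩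
    exact not_disjoint_iff_nonempty_inter.mpr (hint _ hCA B hB.mem)
      (disjoint_setCompress_comm ⟨hjA, hiA⟩ ih.1 hdisj)

lemma partialCompress_mem_famCompress (h𝓑 : 𝓑 ⊆ 𝓐) (hB : B ∈ 𝓑) :
    partialCompress i j 𝓐 𝓑 B ∈ famCompress i j 𝓐 := by
  by_cases hmust : MustCompress i j 𝓐 𝓑 B
  · rw [partialCompress_of_mustCompress hmust]
    exact mem_union_left _ (mem_image_of_mem _ (h𝓑 hB))
  · rw [partialCompress_of_not_mustCompress hmust]
    refine mem_union_right _ (mem_filter.mpr ⟨h𝓑 hB, ?_⟩)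
    by_contra hC
    exact hmust (.of_compress_notMem hB hC)

lemma partialCompress_injOn (h𝓑 : 𝓑 ⊆ 𝓐) (hint : IsIntersecting 𝓑) :
    Set.InjOn (partialCompress i j 𝓐 𝓑) 𝓑 := by
  have hmixed : ∀ {A B}, MustCompress i j 𝓐 𝓑 A → B ∈ 𝓑 → setCompress i j A ≠ B :=
    fun hA hB h => (hA.compressible h𝓑 hint).2 (h ▸ hB)
  intro A hA B hB h
  by_cases hmA : MustCompress i j 𝓐 𝓑 A <;> by_cases hmB : MustCompress i j 𝓐 𝓑 B <;>
    simp only [partialCompress, hmA, hmB, if_true, if_false] at h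
  · exact setCompress_injOn i j (hmA.compressible h𝓑 hint).1 (hmB.compressible h𝓑 hint).1 h
  · exact absurd h (hmixed hmA hB)
  · exact absurd h.symm (hmixed hmB hA)
  · exact h

lemma isIntersecting_image_partialCompress (h𝓑 : 𝓑 ⊆ 𝓐) (hint : IsIntersecting 𝓑) :
    IsIntersecting (𝓑.image (partialCompress i j 𝓐 𝓑)) := by
  have hmixed : ∀ {A B}, MustCompress i j 𝓐 𝓑 A → B ∈ 𝓑 → ¬MustCompress i j 𝓐 𝓑 B →
      (setCompress i j A ∩ B).Nonempty := by
    intro A B hA hB hmB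
    rw [inter_comm, ← not_disjoint_iff_nonempty_inter]
    exact fun hdisj => hmB (.of_disjoint hB hA hdisj)
  simp only [IsIntersecting, forall_mem_image]
  intro A hA B hB
  by_cases hmA : MustCompress i j 𝓐 𝓑 A <;> by_cases hmB : MustCompress i j 𝓐 𝓑 B <;>
    simp only [partialCompress, hmA, hmB, if_true, if_false]
  · exact ⟨i, mem_inter.mpr ⟨mem_setCompress_left (hmA.compressible h𝓑 hint).1,
      mem_setCompress_left (hmB.compressible h𝓑 hint).1⟩⟩
  · exact hmixed hmA hB hmB
  · rw [inter_comm]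
    exact hmixed hmB hA hmA
  · exact hint A hA B hB

lemma mem_or_exists_of_mem_image_partialCompress {X : Finset ℕ}
    (hX : X ∈ 𝓑.image (partialCompress i j 𝓐 𝓑)) :
    X ∈ 𝓑 ∨ ∃ B, MustCompress i j 𝓐 𝓑 B ∧ setCompress i j B = X := by
  obtain ⟨B, hB, rfl⟩ := mem_image.mp hX
  by_cases hmB : MustCompress i j 𝓐 𝓑 B
  · exact .inr ⟨B, hmB, (partialCompress_of_mustCompress hmB).symm⟩
  · exact .inl ((partialCompress_of_not_mustCompress hmB).symm ▸ hB)

lemma mustCompress_of_setCompress_mem_image (h𝓑 : 𝓑 ⊆ 𝓐) (hint : IsIntersecting 𝓑)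
    (hB : j ∈ B ∧ i ∉ B) (hmem : setCompress i j B ∈ 𝓑.image (partialCompress i j 𝓐 𝓑))
    (hnot : setCompress i j B ∉ 𝓑) : MustCompress i j 𝓐 𝓑 B := by
  obtain hmem | ⟨B', hB', hC⟩ := mem_or_exists_of_mem_image_partialCompress hmem
  · exact absurd hmem hnot
  · rwa [← setCompress_injOn i j (hB'.compressible h𝓑 hint).1 hB hC]

variable (h𝓑 : 𝓑 ⊆ 𝓐) (hint : IsIntersecting 𝓑) (h𝓑' : 𝓑' ⊆ 𝓐) (hint' : IsIntersecting 𝓑')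
  (himage : 𝓑.image (partialCompress i j 𝓐 𝓑) = 𝓑'.image (partialCompress i j 𝓐 𝓑'))
include h𝓑 hint h𝓑' hint' himage

lemma MustCompress.of_image_partialCompress_eq (hB : MustCompress i j 𝓐 𝓑 B) :
    MustCompress i j 𝓐 𝓑' B := by
  have hmem : ∀ {A}, MustCompress i j 𝓐 𝓑 A →
      setCompress i j A ∈ 𝓑'.image (partialCompress i j 𝓐 𝓑') := fun hA => by
    rw [← himage, ← partialCompress_of_mustCompress hA]
    exact mem_image_of_mem _ hA.mem
  induction hB with
  | of_compress_notMem hB hC =>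
    have hmB : MustCompress i j 𝓐 𝓑 _ := .of_compress_notMem hB hC
    exact mustCompress_of_setCompress_mem_image h𝓑' hint' (hmB.compressible h𝓑 hint).1
      (hmem hmB) fun h => hC (h𝓑' h)
  | @of_disjoint A B hA hB hdisj ih =>
    have hmA : MustCompress i j 𝓐 𝓑 A := .of_disjoint hA hB hdisj
    have hcA := (hmA.compressible h𝓑 hint).1
    refine mustCompress_of_setCompress_mem_image h𝓑' hint' hcA (hmem hmA) fun hCA => ?_
    exact not_disjoint_iff_nonempty_inter.mpr (hint' _ hCA B ih.mem)
      (disjoint_setCompress_comm hcA (hB.compressible h𝓑 hint).1 hdisj)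

lemma subset_of_image_partialCompress_eq : 𝓑 ⊆ 𝓑' := by
  intro B hB
  by_cases hmB : MustCompress i j 𝓐 𝓑 B
  · exact (hmB.of_image_partialCompress_eq h𝓑 hint h𝓑' hint' himage).mem
  · have hmem : B ∈ 𝓑'.image (partialCompress i j 𝓐 𝓑') := by
      rw [← himage, ← partialCompress_of_not_mustCompress hmB]
      exact mem_image_of_mem _ hB
    obtain hB' | ⟨B', hB', rfl⟩ := mem_or_exists_of_mem_image_partialCompress hmem
    · exact hB'
    · exact absurd hB ((hB'.of_image_partialCompress_eq h𝓑' hint' h𝓑 hint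
        himage.symm).compressible h𝓑 hint).2

end PartialCompress

theorem stmt4_general (𝓐 : Finset (Finset ℕ)) (i j : ℕ) (m : ℕ) :
    numInter 𝓐 m ≤ numInter (famCompress i j 𝓐) m := by
  have hmem : ∀ {𝓒 𝓑 : Finset (Finset ℕ)},
      𝓑 ∈ (𝓒.powerset.filter IsIntersecting).filter (fun 𝓑 => 𝓑.card = m) ↔
        𝓑 ⊆ 𝓒 ∧ IsIntersecting 𝓑 ∧ 𝓑.card = m := by
    simp [and_assoc]
  refine card_le_card_of_injOn (fun 𝓑 => 𝓑.image (partialCompress i j 𝓐 𝓑)) ?_ ?_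
  · intro 𝓑 h𝓑
    obtain ⟨h𝓑, hint, hcard⟩ := hmem.mp h𝓑
    refine hmem.mpr ⟨?_, isIntersecting_image_partialCompress h𝓑 hint, ?_⟩
    · exact image_subset_iff.mpr fun B hB => partialCompress_mem_famCompress h𝓑 hB
    · rw [card_image_of_injOn (partialCompress_injOn h𝓑 hint), hcard]
  · intro 𝓑 h𝓑 𝓑' h𝓑' himage
    obtain ⟨h𝓑, hint, -⟩ := hmem.mp h𝓑
    obtain ⟨h𝓑', hint', -⟩ := hmem.mp h𝓑'
    exact (subset_of_image_partialCompress_eq h𝓑 hint h𝓑' hint' himage).antisymm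
      (subset_of_image_partialCompress_eq h𝓑' hint' h𝓑 hint himage.symm)

theorem stmt4 (n : ℕ) (𝓐 : Finset (Finset ℕ)) (h𝓐 : 𝓐 ⊆ (Finset.Icc 1 n).powerset)
    (i j : ℕ) (hi : 1 ≤ i) (hij : i < j) (hj : j ≤ n) (m : ℕ) :
    numInter 𝓐 m ≤ numInter (famCompress i j 𝓐) m :=
  stmt4_general 𝓐 i j m
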